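/- Let (x̃1, x̃0, ũ0) be Bessel sequences (x̃1, x̃0 in X, ũ0 in U) with synthesis operators Ξ̃1, Ξ̃0 ∈ L(ℓ²(ℕ),X) and Υ̃0 ∈ L(ℓ²(ℕ),U). Assume x̃0 is a frame for X and there exist a right inverse Ξ̃0† ∈ L(X, ℓ²(ℕ)) of Ξ̃0 (i.e., Ξ̃0 Ξ̃0† = I on X) and constants M ≥ 1, γ > 0 such that ‖(Ξ̃1 Ξ̃0†)^k‖ ≤ M γ^k for all k ∈ ℕ₀. Let c1 ≥ 0 and 0 ≤ c0 < 1/M, and set γ̃ := γ(1 + M c1)/(1 − M c0). Then K := Υ̃0 Ξ̃0† ∈ L(X,U) satisfies: every (A,B) ∈ Σ̃_is(c1, c0, Ξ̃0†) satisfies ‖(A + BK)^k‖ ≤ M γ̃^k for all k ∈ ℕ₀. -/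

import Mathlib

/-!
Write `F = A + B K` for the closed loop and `F₀ = Ξ̃₁ Ξ̃₀†`. Evaluating the data equation at
`Ξ̃₀† x` gives `F - F₀ = (A Δ₀ + B Θ₀ - Δ₁) Ξ̃₀†`. Both noise conditions are Gram inequalities
`Q* Q ≤ c² R* R` for operators of the form `R = (Ξ̃₀†)* S*`, i.e. `‖Q y‖ ≤ c ‖R y‖`; since
`(Ξ̃₀†)* (Ξ̃₀* A* + Υ̃₀* B*) = F*`, they yield `‖F* y - F₀* y‖ ≤ c₁ ‖F₀* y‖ + c₀ ‖F* y‖`.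
So `F*` is a relative perturbation of `F₀*` of size `ε = (c₁ + c₀) / (1 - c₀)`. Expanding
`F*ᵏ - F₀*ᵏ` telescopically and inducting on `k` gives `‖Fᵏ‖ = ‖F*ᵏ‖ ≤ M (γ (1 + M ε))ᵏ`, and
`γ (1 + M ε) ≤ γ̃`.
-/

noncomputable section
open ContinuousLinearMap

/-- `ℓ²(ℕ)`: the Hilbert space of square-summable complex sequences. -/
abbrev l2 : Type := lp (fun _ : ℕ => ℂ) 2

/-- `η` is a Bessel sequence in `Y`. -/
def Bessel {Y : Type} [NormedAddCommGroup Y] [InnerProductSpace ℂ Y] (η : ℕ → Y) : Prop :=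
  ∃ α : ℝ, 0 < α ∧ ∀ y : Y, ∑' k : ℕ, ‖(inner ℂ y (η k) : ℂ)‖ ^ 2 ≤ α * ‖y‖ ^ 2

/-- `η` is a frame for `Y`. -/
def IsFrame {Y : Type} [NormedAddCommGroup Y] [InnerProductSpace ℂ Y] (η : ℕ → Y) : Prop :=
  ∃ α β : ℝ, 0 < α ∧ 0 < β ∧ ∀ y : Y,
    β * ‖y‖ ^ 2 ≤ ∑' k : ℕ, ‖(inner ℂ y (η k) : ℂ)‖ ^ 2 ∧
      ∑' k : ℕ, ‖(inner ℂ y (η k) : ℂ)‖ ^ 2 ≤ α * ‖y‖ ^ 2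

/-- `T` is the synthesis operator associated with `η`: `T w = ∑ₖ wₖ • ηₖ`. -/
def IsSynthesis {Y : Type} [NormedAddCommGroup Y] [InnerProductSpace ℂ Y] (η : ℕ → Y)
    (T : l2 →L[ℂ] Y) : Prop :=
  ∀ w : l2, HasSum (fun k : ℕ => w k • η k) (T w)

/-- The block operator `[[A, B], [C, D]]` on the product Hilbert space `E × F`
(with the standard product inner product) is positive semidefinite, i.e. it is
self-adjoint and its quadratic form is nonnegative. -/
def IsPosBlock {E F : Type} [NormedAddCommGroup E] [InnerProductSpace ℂ E]
    [NormedAddCommGroup F] [InnerProductSpace ℂ F]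
    (A : E →L[ℂ] E) (B : F →L[ℂ] E) (C : E →L[ℂ] F) (D : F →L[ℂ] F) : Prop :=
  (∀ (x x' : E) (y y' : F),
      (inner ℂ (A x + B y) x' : ℂ) + (inner ℂ (C x + D y) y' : ℂ)
        = (inner ℂ x (A x' + B y') : ℂ) + (inner ℂ y (C x' + D y') : ℂ)) ∧
  (∀ (x : E) (y : F), 0 ≤ ((inner ℂ (A x + B y) x : ℂ) + (inner ℂ (C x + D y) y : ℂ)).re)

theorem pow_sub_pow_eq_sum {R : Type*} [Ring R] (a b : R) (n : ℕ) :
    a ^ n - b ^ n = ∑ j ∈ Finset.range n, a ^ j * (a - b) * b ^ (n - 1 - j) := by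
  induction n with
  | zero => simp
  | succ n ih =>
    have hshift : ∀ j ∈ Finset.range n,
        a ^ j * (a - b) * b ^ (n + 1 - 1 - j) = a ^ j * (a - b) * b ^ (n - 1 - j) * b := by
      intro j hj
      rw [Finset.mem_range] at hj
      rw [show n + 1 - 1 - j = n - 1 - j + 1 by omega, pow_succ, mul_assoc (a ^ j * (a - b))]
    rw [Finset.sum_range_succ, Finset.sum_congr rfl hshift, ← Finset.sum_mul, ← ih,
      show n + 1 - 1 - n = 0 by omega, pow_zero, mul_one, pow_succ, pow_succ]
    noncomm_ring

section Perturbation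

variable {𝕜 E : Type*} [NontriviallyNormedField 𝕜] [NormedAddCommGroup E] [NormedSpace 𝕜 E]

theorem norm_pow_le_of_norm_sub_apply_le (G G₀ : E →L[𝕜] E) {M γ ε : ℝ} (hγ : 0 ≤ γ)
    (hε : 0 ≤ ε) (hpow : ∀ k : ℕ, ‖G₀ ^ k‖ ≤ M * γ ^ k)
    (hG : ∀ y : E, ‖G y - G₀ y‖ ≤ ε * ‖G₀ y‖) (k : ℕ) :
    ‖G ^ k‖ ≤ M * (γ * (1 + M * ε)) ^ k := by
  have hM : 0 ≤ M := by simpa using (norm_nonneg _).trans (hpow 0)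
  set ρ := γ * (1 + M * ε)
  induction k using Nat.strong_induction_on with
  | _ k ih =>
  refine opNorm_le_bound _ (by positivity) fun w => ?_
  have hexpand : (G ^ k) w = (G₀ ^ k) w
      + ∑ j ∈ Finset.range k, (G ^ j) ((G - G₀) ((G₀ ^ (k - 1 - j)) w)) := by
    rw [← sub_eq_iff_eq_add', ← sub_apply, pow_sub_pow_eq_sum, sum_apply]
    rfl
  have hterm : ∀ j ∈ Finset.range k, ‖(G ^ j) ((G - G₀) ((G₀ ^ (k - 1 - j)) w))‖
      ≤ M * ρ ^ j * (ε * (M * γ ^ (k - 1 - j + 1) * ‖w‖)) := by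
    intro j hj
    calc ‖(G ^ j) ((G - G₀) ((G₀ ^ (k - 1 - j)) w))‖
        ≤ ‖G ^ j‖ * (ε * ‖G₀ ((G₀ ^ (k - 1 - j)) w)‖) :=
          (G ^ j).le_opNorm_of_le (hG _)
      _ ≤ M * ρ ^ j * (ε * (M * γ ^ (k - 1 - j + 1) * ‖w‖)) := by
          rw [← mul_apply_eq_comp, ← pow_succ']
          gcongr
          · exact ih j (Finset.mem_range.mp hj)
          · exact (G₀ ^ _).le_of_opNorm_le (hpow _) w
  -- `ρ - γ = M ε γ`, so the error terms form the geometric sum `M (ρ ^ k - γ ^ k) ‖w‖`.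
  have hgeom : ∑ j ∈ Finset.range k, M * ρ ^ j * (ε * (M * γ ^ (k - 1 - j + 1) * ‖w‖))
      = M * (ρ ^ k - γ ^ k) * ‖w‖ := by
    rw [← geom_sum₂_mul, Finset.sum_mul, Finset.mul_sum, Finset.sum_mul]
    refine Finset.sum_congr rfl fun j _ => ?_
    rw [pow_succ]
    ring
  calc ‖(G ^ k) w‖
      ≤ ‖(G₀ ^ k) w‖ + ∑ j ∈ Finset.range k, ‖(G ^ j) ((G - G₀) ((G₀ ^ (k - 1 - j)) w))‖ := by
        rw [hexpand]
        exact (norm_add_le _ _).trans (by gcongr; exact norm_sum_le _ _)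
    _ ≤ M * γ ^ k * ‖w‖ + M * (ρ ^ k - γ ^ k) * ‖w‖ := by
        rw [← hgeom]
        exact add_le_add ((G₀ ^ k).le_of_opNorm_le (hpow k) w) (Finset.sum_le_sum hterm)
    _ = M * ρ ^ k * ‖w‖ := by ring

end Perturbation

theorem norm_sub_le_div_mul_of_norm_sub_le {E : Type*} [SeminormedAddCommGroup E] {a b : E}
    {c₁ c₀ : ℝ} (hc₀ : 0 ≤ c₀) (hc₀' : c₀ < 1) (h : ‖a - b‖ ≤ c₁ * ‖b‖ + c₀ * ‖a‖) :
    ‖a - b‖ ≤ (c₁ + c₀) / (1 - c₀) * ‖b‖ := by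
  rw [div_mul_eq_mul_div, le_div_iff₀ (by linarith)]
  nlinarith [norm_le_norm_add_norm_sub' a b]

theorem one_add_mul_div_le_div {M c₁ c₀ : ℝ} (hM : 1 ≤ M) (hc₁ : 0 ≤ c₁) (hc₀ : 0 ≤ c₀)
    (hMc₀ : M * c₀ < 1) :
    1 + M * ((c₁ + c₀) / (1 - c₀)) ≤ (1 + M * c₁) / (1 - M * c₀) := by
  have hc₀' : c₀ < 1 := by nlinarith
  set q := (c₁ + c₀) / (1 - c₀)
  have hq : q * (1 - c₀) = c₁ + c₀ := div_mul_cancel₀ _ (by linarith)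
  have hq₀ : 0 ≤ q := div_nonneg (by linarith) (by linarith)
  rw [le_div_iff₀ (by linarith)]
  have hMq : 0 ≤ M * q * (M * c₀ - c₀) :=
    mul_nonneg (mul_nonneg (by linarith) hq₀) (by nlinarith)
  nlinarith

theorem norm_add_sq_eq_inner {G : Type*} [NormedAddCommGroup G] [InnerProductSpace ℂ G]
    (a b : G) :
    (‖a + b‖ : ℂ) ^ 2 = inner ℂ a a + inner ℂ a b + inner ℂ b a + inner ℂ b b := by
  rw [← RCLike.ofReal_eq_complex_ofReal, ← inner_self_eq_norm_sq_to_K, inner_add_add_self]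

section Hilbert

variable {E F G H : Type*} [NormedAddCommGroup E] [InnerProductSpace ℂ E] [CompleteSpace E]
  [NormedAddCommGroup F] [InnerProductSpace ℂ F] [CompleteSpace F]
  [NormedAddCommGroup G] [InnerProductSpace ℂ G] [CompleteSpace G]
  [NormedAddCommGroup H] [InnerProductSpace ℂ H] [CompleteSpace H]

theorem norm_adjoint_pow (T : E →L[ℂ] E) (k : ℕ) : ‖adjoint T ^ k‖ = ‖T ^ k‖ := by
  rw [← star_eq_adjoint, ← star_pow, norm_star]

theorem comp_comp_adjoint_eq_adjoint_comp (S : E →L[ℂ] F) (T : E →L[ℂ] G) (Ω : H →L[ℂ] E) :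
    S ∘L (Ω ∘L adjoint Ω) ∘L adjoint T
      = adjoint (adjoint Ω ∘L adjoint S) ∘L (adjoint Ω ∘L adjoint T) := by
  simp only [adjoint_comp, adjoint_adjoint, comp_assoc]

theorem norm_apply_le_of_isPositive {c : ℝ} (hc : 0 ≤ c) (R Q : E →L[ℂ] F)
    (h : ((c ^ 2 : ℂ) • (adjoint R ∘L R) - adjoint Q ∘L Q).IsPositive) (y : E) :
    ‖Q y‖ ≤ c * ‖R y‖ := by
  have hy : 0 ≤ c ^ 2 * ‖R y‖ ^ 2 - ‖Q y‖ ^ 2 := by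
    convert h.re_inner_nonneg_left y using 1
    rw [← Complex.ofReal_re (c ^ 2 * _ - _)]
    congr 1
    simp only [sub_apply, smul_apply, comp_apply, inner_sub_left, inner_smul_left,
      adjoint_inner_left, inner_self_eq_norm_sq_to_K, RCLike.ofReal_eq_complex_ofReal, map_pow,
      Complex.conj_ofReal]
    push_cast
    ring
  refine (pow_le_pow_iff_left₀ (norm_nonneg _) (by positivity) two_ne_zero).mp ?_
  nlinarith

end Hilbert

theorem norm_add_apply_le_of_isPosBlock {E F G : Type} [NormedAddCommGroup E]
    [InnerProductSpace ℂ E] [CompleteSpace E] [NormedAddCommGroup F] [InnerProductSpace ℂ F]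
    [CompleteSpace F] [NormedAddCommGroup G] [InnerProductSpace ℂ G] [CompleteSpace G]
    {c : ℝ} (hc : 0 ≤ c) (R₁ Q₁ : E →L[ℂ] G) (R₂ Q₂ : F →L[ℂ] G)
    (h : IsPosBlock ((c ^ 2 : ℂ) • (adjoint R₁ ∘L R₁) - adjoint Q₁ ∘L Q₁)
      ((c ^ 2 : ℂ) • (adjoint R₁ ∘L R₂) - adjoint Q₁ ∘L Q₂)
      ((c ^ 2 : ℂ) • (adjoint R₂ ∘L R₁) - adjoint Q₂ ∘L Q₁)
      ((c ^ 2 : ℂ) • (adjoint R₂ ∘L R₂) - adjoint Q₂ ∘L Q₂)) (x : E) (u : F) :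
    ‖Q₁ x + Q₂ u‖ ≤ c * ‖R₁ x + R₂ u‖ := by
  have hxu : 0 ≤ c ^ 2 * ‖R₁ x + R₂ u‖ ^ 2 - ‖Q₁ x + Q₂ u‖ ^ 2 := by
    convert h.2 x u using 1
    rw [← Complex.ofReal_re (c ^ 2 * _ - _)]
    congr 1
    simp only [sub_apply, smul_apply, comp_apply, inner_add_left, inner_sub_left,
      inner_smul_left, adjoint_inner_left, map_pow, Complex.conj_ofReal]
    push_cast
    linear_combination (c : ℂ) ^ 2 * norm_add_sq_eq_inner (R₁ x) (R₂ u)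
      - norm_add_sq_eq_inner (Q₁ x) (Q₂ u)
  refine (pow_le_pow_iff_left₀ (norm_nonneg _) (by positivity) two_ne_zero).mp ?_
  nlinarith

namespace IsSynthesis

variable {Y Z : Type} [NormedAddCommGroup Y] [InnerProductSpace ℂ Y]
  [NormedAddCommGroup Z] [InnerProductSpace ℂ Z] {η η' : ℕ → Y} {T T' : l2 →L[ℂ] Y}

theorem unique (h : IsSynthesis η T) (h' : IsSynthesis η T') : T = T' :=
  ext fun w => (h w).unique (h' w)

theorem add (h : IsSynthesis η T) (h' : IsSynthesis η' T') : IsSynthesis (η + η') (T + T') :=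
  fun w => by simpa only [Pi.add_apply, add_apply, smul_add] using (h w).add (h' w)

theorem sub (h : IsSynthesis η T) (h' : IsSynthesis η' T') : IsSynthesis (η - η') (T - T') :=
  fun w => by simpa only [Pi.sub_apply, sub_apply, smul_sub] using (h w).sub (h' w)

theorem map (h : IsSynthesis η T) (A : Y →L[ℂ] Z) : IsSynthesis (A ∘ η) (A ∘L T) :=
  fun w => by simpa only [Function.comp_apply, comp_apply, map_smul] using (h w).mapL A

end IsSynthesis

section ClosedLoop

variable {W X U : Type} [NormedAddCommGroup W] [InnerProductSpace ℂ W]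
  [NormedAddCommGroup X] [InnerProductSpace ℂ X] [NormedAddCommGroup U] [InnerProductSpace ℂ U]
  {Ξ₁ Ξ₀ Δ₁ Δ₀ : W →L[ℂ] X} {Υ₀ Θ₀ : W →L[ℂ] U} {Ω : X →L[ℂ] W} {A : X →L[ℂ] X}
  {B : U →L[ℂ] X}

theorem closedLoop_sub_eq (hΩ : Ξ₀ ∘L Ω = ContinuousLinearMap.id ℂ X)
    (hdata : Ξ₁ - Δ₁ = A ∘L (Ξ₀ - Δ₀) + B ∘L (Υ₀ - Θ₀)) :
    A + B ∘L (Υ₀ ∘L Ω) - Ξ₁ ∘L Ω = (A ∘L Δ₀ + B ∘L Θ₀ - Δ₁) ∘L Ω := by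
  ext x
  have hx := congr($hdata (Ω x))
  have hΩx : Ξ₀ (Ω x) = x := congr($hΩ x)
  simp only [sub_apply, add_apply, comp_apply, map_sub, hΩx] at hx ⊢
  linear_combination (norm := module) -hx

variable [CompleteSpace W] [CompleteSpace X] [CompleteSpace U]

theorem norm_adjoint_closedLoop_sub_le {c₁ c₀ : ℝ} (hc₁ : 0 ≤ c₁) (hc₀ : 0 ≤ c₀)
    (hΩ : Ξ₀ ∘L Ω = ContinuousLinearMap.id ℂ X) (hdata : Ξ₁ - Δ₁ = A ∘L (Ξ₀ - Δ₀) + B ∘L (Υ₀ - Θ₀))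
    (hpos₁ : ((c₁ ^ 2 : ℂ) • (Ξ₁ ∘L (Ω ∘L adjoint Ω) ∘L adjoint Ξ₁)
      - Δ₁ ∘L (Ω ∘L adjoint Ω) ∘L adjoint Δ₁).IsPositive)
    (hpos₀ : IsPosBlock
      ((c₀ ^ 2 : ℂ) • (Ξ₀ ∘L (Ω ∘L adjoint Ω) ∘L adjoint Ξ₀)
        - Δ₀ ∘L (Ω ∘L adjoint Ω) ∘L adjoint Δ₀)
      ((c₀ ^ 2 : ℂ) • (Ξ₀ ∘L (Ω ∘L adjoint Ω) ∘L adjoint Υ₀)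
        - Δ₀ ∘L (Ω ∘L adjoint Ω) ∘L adjoint Θ₀)
      ((c₀ ^ 2 : ℂ) • (Υ₀ ∘L (Ω ∘L adjoint Ω) ∘L adjoint Ξ₀)
        - Θ₀ ∘L (Ω ∘L adjoint Ω) ∘L adjoint Δ₀)
      ((c₀ ^ 2 : ℂ) • (Υ₀ ∘L (Ω ∘L adjoint Ω) ∘L adjoint Υ₀)
        - Θ₀ ∘L (Ω ∘L adjoint Ω) ∘L adjoint Θ₀)) (y : X) :
    ‖adjoint (A + B ∘L (Υ₀ ∘L Ω)) y - adjoint (Ξ₁ ∘L Ω) y‖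
      ≤ c₁ * ‖adjoint (Ξ₁ ∘L Ω) y‖ + c₀ * ‖adjoint (A + B ∘L (Υ₀ ∘L Ω)) y‖ := by
  simp only [comp_comp_adjoint_eq_adjoint_comp] at hpos₁ hpos₀
  have h₁ := norm_apply_le_of_isPositive hc₁ _ _ hpos₁ y
  have h₀ := norm_add_apply_le_of_isPosBlock hc₀ _ _ _ _ hpos₀ (adjoint A y) (adjoint B y)
  have hΩy (z : X) : adjoint Ω (adjoint Ξ₀ z) = z := by
    rw [← comp_apply, ← adjoint_comp, hΩ, adjoint_id, id_apply]
  simp only [comp_apply, hΩy] at h₁ h₀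
  have hdiff : adjoint (A + B ∘L (Υ₀ ∘L Ω)) y - adjoint (Ξ₁ ∘L Ω) y
      = (adjoint Ω (adjoint Δ₀ (adjoint A y)) + adjoint Ω (adjoint Θ₀ (adjoint B y)))
        - adjoint Ω (adjoint Δ₁ y) := by
    rw [← sub_apply, ← map_sub, closedLoop_sub_eq hΩ hdata]
    simp only [adjoint_comp, map_add, map_sub, comp_apply, add_apply, sub_apply]
  rw [hdiff]
  simp only [adjoint_comp, map_add, add_apply, comp_apply]
  calc _ ≤ _ := norm_sub_le _ _
    _ ≤ c₀ * ‖adjoint A y + adjoint Ω (adjoint Υ₀ (adjoint B y))‖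
        + c₁ * ‖adjoint Ω (adjoint Ξ₁ y)‖ := add_le_add h₀ h₁
    _ = _ := add_comm _ _

end ClosedLoop

theorem stmt_7_general
    {X : Type} [NormedAddCommGroup X] [InnerProductSpace ℂ X] [CompleteSpace X]
    {U : Type} [NormedAddCommGroup U] [InnerProductSpace ℂ U] [CompleteSpace U]
    (xt1 xt0 : ℕ → X) (ut0 : ℕ → U)
    (Ξt1 Ξt0 : l2 →L[ℂ] X) (Υt0 : l2 →L[ℂ] U)
    (hΞt1 : IsSynthesis xt1 Ξt1) (hΞt0 : IsSynthesis xt0 Ξt0) (hΥt0 : IsSynthesis ut0 Υt0)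
    (Ξd : X →L[ℂ] l2) (hΞd : Ξt0 ∘L Ξd = ContinuousLinearMap.id ℂ X)
    (M γ : ℝ) (hM : 1 ≤ M) (hγ : 0 < γ)
    (hpow : ∀ k : ℕ, ‖(Ξt1 ∘L Ξd) ^ k‖ ≤ M * γ ^ k)
    (c1 c0 : ℝ) (hc1 : 0 ≤ c1) (hc00 : 0 ≤ c0) (hc0 : c0 < 1 / M) :
    ∀ (A : X →L[ℂ] X) (B : U →L[ℂ] X),
      -- (A, B) ∈ Σ̃_is(c1, c0, Ξ̃0†)
      (∃ (δ1 δ0 : ℕ → X) (θ0 : ℕ → U) (Δ1 Δ0 : l2 →L[ℂ] X) (Θ0 : l2 →L[ℂ] U),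
        Bessel δ1 ∧ Bessel δ0 ∧ Bessel θ0 ∧
        IsSynthesis δ1 Δ1 ∧ IsSynthesis δ0 Δ0 ∧ IsSynthesis θ0 Θ0 ∧
        -- Δ1 Ω Ω* Δ1* ≤ c1² Ξ̃1 Ω Ω* Ξ̃1*  (with Ω = Ξ̃0†)
        ((c1 ^ 2 : ℂ) • (Ξt1 ∘L (Ξd ∘L adjoint Ξd) ∘L adjoint Ξt1)
            - Δ1 ∘L (Ξd ∘L adjoint Ξd) ∘L adjoint Δ1).IsPositive ∧
        -- H_δ Ω Ω* H_δ* ≤ c0² H̃ Ω Ω* H̃*  on X × U, in block form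
        IsPosBlock
          ((c0 ^ 2 : ℂ) • (Ξt0 ∘L (Ξd ∘L adjoint Ξd) ∘L adjoint Ξt0)
            - Δ0 ∘L (Ξd ∘L adjoint Ξd) ∘L adjoint Δ0)
          ((c0 ^ 2 : ℂ) • (Ξt0 ∘L (Ξd ∘L adjoint Ξd) ∘L adjoint Υt0)
            - Δ0 ∘L (Ξd ∘L adjoint Ξd) ∘L adjoint Θ0)
          ((c0 ^ 2 : ℂ) • (Υt0 ∘L (Ξd ∘L adjoint Ξd) ∘L adjoint Ξt0)
            - Θ0 ∘L (Ξd ∘L adjoint Ξd) ∘L adjoint Δ0)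
          ((c0 ^ 2 : ℂ) • (Υt0 ∘L (Ξd ∘L adjoint Ξd) ∘L adjoint Υt0)
            - Θ0 ∘L (Ξd ∘L adjoint Ξd) ∘L adjoint Θ0) ∧
        ∀ k : ℕ, xt1 k - δ1 k = A (xt0 k - δ0 k) + B (ut0 k - θ0 k)) →
      -- conclusion: K = Υ̃0 Ξ̃0† stabilizes (A, B) with decay rate γ̃
      ∀ k : ℕ, ‖(A + B.comp (Υt0 ∘L Ξd)) ^ k‖ ≤ M * ((1 + M * c1) / (1 - M * c0) * γ) ^ k := by
  rintro A B ⟨δ1, δ0, θ0, Δ1, Δ0, Θ0, -, -, -, hΔ1, hΔ0, hΘ0, hpos1, hpos0, hdata⟩ k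
  have hMc0 : M * c0 < 1 := by
    rwa [lt_div_iff₀ (by linarith), mul_comm] at hc0
  have hc0' : c0 < 1 := by nlinarith
  have hop : Ξt1 - Δ1 = A ∘L (Ξt0 - Δ0) + B ∘L (Υt0 - Θ0) :=
    (hΞt1.sub hΔ1).unique <| by
      convert ((hΞt0.sub hΔ0).map A).add ((hΥt0.sub hΘ0).map B) using 1
      exact funext hdata
  have hrel (y : X) := norm_sub_le_div_mul_of_norm_sub_le hc00 hc0'
    (norm_adjoint_closedLoop_sub_le hc1 hc00 hΞd hop hpos1 hpos0 y)
  calc ‖(A + B ∘L (Υt0 ∘L Ξd)) ^ k‖ = ‖adjoint (A + B ∘L (Υt0 ∘L Ξd)) ^ k‖ :=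
        (norm_adjoint_pow _ k).symm
    _ ≤ M * (γ * (1 + M * ((c1 + c0) / (1 - c0)))) ^ k :=
        norm_pow_le_of_norm_sub_apply_le _ _ hγ.le (div_nonneg (by linarith) (by linarith))
          (fun k => (norm_adjoint_pow _ k).trans_le (hpow k)) hrel k
    _ ≤ M * ((1 + M * c1) / (1 - M * c0) * γ) ^ k := by
        rw [mul_comm γ]
        gcongr
        exact one_add_mul_div_le_div hM hc1 hc00 hMc0

theorem stmt_7
    {X : Type} [NormedAddCommGroup X] [InnerProductSpace ℂ X] [CompleteSpace X] [Nontrivial X]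
    {U : Type} [NormedAddCommGroup U] [InnerProductSpace ℂ U] [CompleteSpace U] [Nontrivial U]
    (xt1 xt0 : ℕ → X) (ut0 : ℕ → U)
    (hxt1B : Bessel xt1) (hxt0B : Bessel xt0) (hut0B : Bessel ut0)
    (Ξt1 Ξt0 : l2 →L[ℂ] X) (Υt0 : l2 →L[ℂ] U)
    (hΞt1 : IsSynthesis xt1 Ξt1) (hΞt0 : IsSynthesis xt0 Ξt0) (hΥt0 : IsSynthesis ut0 Υt0)
    (hframe : IsFrame xt0)
    (Ξd : X →L[ℂ] l2) (hΞd : Ξt0 ∘L Ξd = ContinuousLinearMap.id ℂ X)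
    (M γ : ℝ) (hM : 1 ≤ M) (hγ : 0 < γ)
    (hpow : ∀ k : ℕ, ‖(Ξt1 ∘L Ξd) ^ k‖ ≤ M * γ ^ k)
    (c1 c0 : ℝ) (hc1 : 0 ≤ c1) (hc00 : 0 ≤ c0) (hc0 : c0 < 1 / M) :
    ∀ (A : X →L[ℂ] X) (B : U →L[ℂ] X),
      -- (A, B) ∈ Σ̃_is(c1, c0, Ξ̃0†)
      (∃ (δ1 δ0 : ℕ → X) (θ0 : ℕ → U) (Δ1 Δ0 : l2 →L[ℂ] X) (Θ0 : l2 →L[ℂ] U),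
        Bessel δ1 ∧ Bessel δ0 ∧ Bessel θ0 ∧
        IsSynthesis δ1 Δ1 ∧ IsSynthesis δ0 Δ0 ∧ IsSynthesis θ0 Θ0 ∧
        -- Δ1 Ω Ω* Δ1* ≤ c1² Ξ̃1 Ω Ω* Ξ̃1*  (with Ω = Ξ̃0†)
        ((c1 ^ 2 : ℂ) • (Ξt1 ∘L (Ξd ∘L adjoint Ξd) ∘L adjoint Ξt1)
            - Δ1 ∘L (Ξd ∘L adjoint Ξd) ∘L adjoint Δ1).IsPositive ∧
        -- H_δ Ω Ω* H_δ* ≤ c0² H̃ Ω Ω* H̃*  on X × U, in block form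
        IsPosBlock
          ((c0 ^ 2 : ℂ) • (Ξt0 ∘L (Ξd ∘L adjoint Ξd) ∘L adjoint Ξt0)
            - Δ0 ∘L (Ξd ∘L adjoint Ξd) ∘L adjoint Δ0)
          ((c0 ^ 2 : ℂ) • (Ξt0 ∘L (Ξd ∘L adjoint Ξd) ∘L adjoint Υt0)
            - Δ0 ∘L (Ξd ∘L adjoint Ξd) ∘L adjoint Θ0)
          ((c0 ^ 2 : ℂ) • (Υt0 ∘L (Ξd ∘L adjoint Ξd) ∘L adjoint Ξt0)
            - Θ0 ∘L (Ξd ∘L adjoint Ξd) ∘L adjoint Δ0)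
          ((c0 ^ 2 : ℂ) • (Υt0 ∘L (Ξd ∘L adjoint Ξd) ∘L adjoint Υt0)
            - Θ0 ∘L (Ξd ∘L adjoint Ξd) ∘L adjoint Θ0) ∧
        ∀ k : ℕ, xt1 k - δ1 k = A (xt0 k - δ0 k) + B (ut0 k - θ0 k)) →
      -- conclusion: K = Υ̃0 Ξ̃0† stabilizes (A, B) with decay rate γ̃
      ∀ k : ℕ, ‖(A + B.comp (Υt0 ∘L Ξd)) ^ k‖ ≤ M * ((1 + M * c1) / (1 - M * c0) * γ) ^ k :=
  stmt_7_general xt1 xt0 ut0 Ξt1 Ξt0 Υt0 hΞt1 hΞt0 hΥt0 Ξd hΞd M γ hM hγ hpow c1 c0 hc1 hc00 hc0
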